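/- Fix ε = 2^{-m} for some integer m ≥ 1 and suppose each rₙ = 2^{-jₙ} for some integer jₙ ≥ 1. For each dyadic square Δ of generation n with slit s(Δ) = {x}×[a,b] of length l = rₙ·2⁻ⁿ, define the ε-collar s^ε(Δ) = (x, x+εl) × [a,b]. Then for any two distinct dyadic squares Δ, Δ', the collars s^ε(Δ) and s^ε(Δ') are either disjoint or one is contained in the closure of the other. -/

import Mathlib

/-- The `ε`-collar of the slit of the dyadic square of generation `n` with indices
`i, j`: for the slit `{x} × [a,b]` of length `l = r n / 2ⁿ`, the collar is the
rectangle `(x, x + εl) × [a,b]`. -/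
noncomputable def collar (r : ℕ → ℝ) (ε : ℝ) (n i j : ℕ) : Set (ℝ × ℝ) :=
  Set.Ioo (((i : ℝ) + 1 / 2) / 2 ^ n)
      ((((i : ℝ) + 1 / 2) / 2 ^ n) + ε * (r n / 2 ^ n)) ×ˢ
    Set.Icc ((((j : ℝ) + 1 / 2) / 2 ^ n) - r n / 2 ^ (n + 1))
            ((((j : ℝ) + 1 / 2) / 2 ^ n) + r n / 2 ^ (n + 1))

/-!
Let `n < n'` and `u = 2^-(n'+1)`. The centre of a slit of generation `n'` is an odd multiple of
`u`, and its collar has width at most `u` and half-height less than `u`. If the collar of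
generation `n` has width at least `2u`, then (as `ε ≤ 1/2`) all four of its edges lie on the grid
`2uℤ`, at distance at least `u` from that centre, so none of them cuts the finer collar, which is
therefore inside or outside the coarser one. Otherwise both collars have width at most `u`, while
their left edges, an even and an odd multiple of `u`, are at least `u` apart. Two collars of the
same generation are separated since their centres are `2^-n` apart.
-/

open Set

theorem Set.OrdConnected.subset_Ioo_or_disjoint_Icc {α : Type*} [LinearOrder α] {s : Set α}
    {a b : α} (hs : s.OrdConnected) (ha : a ∉ s) (hb : b ∉ s) :
    s ⊆ Ioo a b ∨ Disjoint s (Icc a b) := by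
  refine or_iff_not_imp_right.2 fun h q hq => ?_
  obtain ⟨p, hps, hpa, hpb⟩ := not_disjoint_iff.1 h
  constructor
  · by_contra! hqa
    exact ha (hs.out hq hps ⟨hqa, hpa⟩)
  · by_contra! hbq
    exact hb (hs.out hps hq ⟨hpb, hbq⟩)

theorem Set.OrdConnected.prod_subset_or_disjoint {α β : Type*} [LinearOrder α] [LinearOrder β]
    {s : Set α} {t : Set β} {a b : α} {c d : β} (hs : s.OrdConnected) (ht : t.OrdConnected)
    (ha : a ∉ s) (hb : b ∉ s) (hc : c ∉ t) (hd : d ∉ t) :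
    s ×ˢ t ⊆ Ioo a b ×ˢ Icc c d ∨ Disjoint (Ioo a b ×ˢ Icc c d) (s ×ˢ t) := by
  rcases hs.subset_Ioo_or_disjoint_Icc ha hb with hs' | hs'
  · rcases ht.subset_Ioo_or_disjoint_Icc hc hd with ht' | ht'
    · exact Or.inl (prod_mono hs' (ht'.trans Ioo_subset_Icc_self))
    · exact Or.inr (disjoint_prod.2 (Or.inr ht'.symm))
  · exact Or.inr (disjoint_prod.2 (Or.inl (hs'.mono_right Ioo_subset_Icc_self).symm))

section Intervals

variable {α : Type*} [Field α] [LinearOrder α] [IsStrictOrderedRing α] {p q w w' : α}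

theorem notMem_Ioo_of_le_abs_sub (h : w ≤ |p - q|) : p ∉ Ioo q (q + w) := fun hp => by
  rw [abs_of_pos (sub_pos.2 hp.1)] at h
  linarith [hp.2]

theorem notMem_Icc_of_lt_abs_sub (h : w < |p - q|) : p ∉ Icc (q - w) (q + w) := fun hp =>
  h.not_ge (abs_sub_le_iff.2 ⟨by linarith [hp.2], by linarith [hp.1]⟩)

theorem Ioo_disjoint_Ioo_of_le_abs_sub (hw : w ≤ |p - q|) (hw' : w' ≤ |p - q|) :
    Disjoint (Ioo p (p + w)) (Ioo q (q + w')) := by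
  refine disjoint_left.2 fun x hp hq => ?_
  rcases le_total q p with h | h
  · rw [abs_of_nonneg (sub_nonneg.2 h)] at hw'
    linarith [hp.1, hq.2]
  · rw [abs_of_nonpos (sub_nonpos.2 h)] at hw
    linarith [hp.2, hq.1]

theorem Icc_disjoint_Icc_of_lt_abs_sub (h : w + w' < |p - q|) :
    Disjoint (Icc (p - w) (p + w)) (Icc (q - w') (q + w')) :=
  disjoint_left.2 fun _ hp hq =>
    h.not_ge (abs_sub_le_iff.2 ⟨by linarith [hp.1, hq.2], by linarith [hp.2, hq.1]⟩)

theorem le_abs_intCast_mul {v : α} (hv : 0 ≤ v) {z : ℤ} (hz : z ≠ 0) : v ≤ |(z : α) * v| := by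
  rw [abs_mul, abs_of_nonneg hv]
  exact le_mul_of_one_le_left hv (by exact_mod_cast Int.one_le_abs hz)

end Intervals

noncomputable abbrev dyadicGrid (K : ℕ) : AddSubgroup ℝ := AddSubgroup.zmultiples ((2 : ℝ)⁻¹ ^ K)

theorem inv_two_pow_mem_dyadicGrid {K L : ℕ} (h : K ≤ L) : (2 : ℝ)⁻¹ ^ K ∈ dyadicGrid L := by
  obtain ⟨d, rfl⟩ := Nat.exists_eq_add_of_le h
  refine AddSubgroup.mem_zmultiples_iff.2 ⟨2 ^ d, ?_⟩
  rw [zsmul_eq_mul, pow_add, inv_pow, inv_pow]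
  push_cast
  field_simp

theorem dyadicGrid_mono {K L : ℕ} (h : K ≤ L) : dyadicGrid K ≤ dyadicGrid L :=
  AddSubgroup.zmultiples_le.2 (inv_two_pow_mem_dyadicGrid h)

theorem center_sub_mem_dyadicGrid (k n : ℕ) :
    ((k : ℝ) + 1 / 2) / 2 ^ n - 2⁻¹ ^ (n + 1) ∈ dyadicGrid n :=
  AddSubgroup.mem_zmultiples_iff.2 ⟨k, by
    rw [zsmul_eq_mul, inv_pow, inv_pow]
    push_cast
    field_simp
    ring⟩

theorem center_mem_dyadicGrid (k n : ℕ) : ((k : ℝ) + 1 / 2) / 2 ^ n ∈ dyadicGrid (n + 1) := by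
  simpa using add_mem (dyadicGrid_mono n.le_succ (center_sub_mem_dyadicGrid k n))
    (inv_two_pow_mem_dyadicGrid le_rfl)

theorem inv_two_pow_succ_le_abs_sub {K : ℕ} {p q : ℝ} (hp : p ∈ dyadicGrid K)
    (hq : q - 2⁻¹ ^ (K + 1) ∈ dyadicGrid K) : (2 : ℝ)⁻¹ ^ (K + 1) ≤ |p - q| := by
  obtain ⟨k, rfl⟩ := AddSubgroup.mem_zmultiples_iff.1 hp
  obtain ⟨l, hl⟩ := AddSubgroup.mem_zmultiples_iff.1 hq
  rw [zsmul_eq_mul] at hl ⊢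
  have hdiff : k * (2 : ℝ)⁻¹ ^ K - q = ((2 * k - 2 * l - 1 : ℤ) : ℝ) * 2⁻¹ ^ (K + 1) := by
    push_cast
    rw [pow_succ]
    linear_combination hl
  rw [hdiff]
  exact le_abs_intCast_mul (by positivity) (by omega)

theorem inv_two_pow_le_abs_center_sub {k l : ℕ} (n : ℕ) (h : k ≠ l) :
    (2 : ℝ)⁻¹ ^ n ≤ |((k : ℝ) + 1 / 2) / 2 ^ n - ((l : ℝ) + 1 / 2) / 2 ^ n| := by
  have hdiff : ((k : ℝ) + 1 / 2) / 2 ^ n - ((l : ℝ) + 1 / 2) / 2 ^ n =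
      ((k - l : ℤ) : ℝ) * 2⁻¹ ^ n := by
    push_cast
    rw [inv_pow]
    field_simp
    ring
  rw [hdiff]
  exact le_abs_intCast_mul (by positivity) (by omega)

section Collar

variable {r : ℕ → ℝ} {ε : ℝ} {m n jn : ℕ}

theorem collar_width_eq (hε : ε = 2⁻¹ ^ m) (hr : r n = 2⁻¹ ^ jn) :
    ε * (r n / 2 ^ n) = (2 : ℝ)⁻¹ ^ (m + jn + n) := by
  rw [hε, hr, div_eq_mul_inv, ← inv_pow, pow_add, pow_add]
  ring

theorem collar_halfHeight_eq (hr : r n = 2⁻¹ ^ jn) :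
    r n / 2 ^ (n + 1) = (2 : ℝ)⁻¹ ^ (jn + n + 1) := by
  rw [hr, div_eq_mul_inv, ← inv_pow, pow_add, pow_add]
  ring

theorem collar_disjoint_of_ne (hεr : ε * r n ≤ 1) (hr : r n < 1) {i j i' j' : ℕ}
    (hne : (i, j) ≠ (i', j')) : Disjoint (collar r ε n i j) (collar r ε n i' j') := by
  rcases eq_or_ne i i' with rfl | hi
  · have hj : j ≠ j' := fun h => hne (by rw [h])
    refine disjoint_prod.2 (Or.inr (Icc_disjoint_Icc_of_lt_abs_sub
      (lt_of_lt_of_le ?_ (inv_two_pow_le_abs_center_sub n hj))))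
    rw [inv_pow, pow_succ]
    field_simp
    linarith
  · have hw : ε * (r n / 2 ^ n) ≤ 2⁻¹ ^ n := by
      rw [inv_pow, ← mul_div_assoc, div_eq_mul_inv]
      exact mul_le_of_le_one_left (by positivity) hεr
    have hsep := inv_two_pow_le_abs_center_sub n hi
    exact disjoint_prod.2 (Or.inl (Ioo_disjoint_Ioo_of_le_abs_sub (hw.trans hsep) (hw.trans hsep)))

theorem collar_subset_or_disjoint_of_lt {n' jn' i j i' j' : ℕ} (hm : 1 ≤ m)
    (hε : ε = 2⁻¹ ^ m) (hr : r n = 2⁻¹ ^ jn) (hr' : r n' = 2⁻¹ ^ jn') (hjn' : 1 ≤ jn')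
    (hn : n < n') :
    collar r ε n' i' j' ⊆ collar r ε n i j ∨ Disjoint (collar r ε n i j) (collar r ε n' i' j') := by
  have hw' : ε * (r n' / 2 ^ n') ≤ 2⁻¹ ^ (n' + 1) := by
    rw [collar_width_eq hε hr']
    exact pow_le_pow_of_le_one (by norm_num) (by norm_num) (by omega)
  have hh' : r n' / 2 ^ (n' + 1) < 2⁻¹ ^ (n' + 1) := by
    rw [collar_halfHeight_eq hr']
    exact pow_lt_pow_right_of_lt_one₀ (by norm_num) (by norm_num) (by omega)
  have hx : ((i : ℝ) + 1 / 2) / 2 ^ n ∈ dyadicGrid n' :=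
    dyadicGrid_mono hn (center_mem_dyadicGrid i n)
  have hsep_x {p : ℝ} (hp : p ∈ dyadicGrid n') :=
    inv_two_pow_succ_le_abs_sub hp (center_sub_mem_dyadicGrid i' n')
  by_cases hcoarse : m + jn + n ≤ n'
  · have hy : ((j : ℝ) + 1 / 2) / 2 ^ n ∈ dyadicGrid n' :=
      dyadicGrid_mono hn (center_mem_dyadicGrid j n)
    have hw : ε * (r n / 2 ^ n) ∈ dyadicGrid n' :=
      collar_width_eq hε hr ▸ inv_two_pow_mem_dyadicGrid hcoarse
    have hh : r n / 2 ^ (n + 1) ∈ dyadicGrid n' :=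
      collar_halfHeight_eq hr ▸ inv_two_pow_mem_dyadicGrid (by omega)
    have hnot_x {p : ℝ} (hp : p ∈ dyadicGrid n') :=
      notMem_Ioo_of_le_abs_sub (hw'.trans (hsep_x hp))
    have hnot_y {p : ℝ} (hp : p ∈ dyadicGrid n') := notMem_Icc_of_lt_abs_sub
      (hh'.trans_le (inv_two_pow_succ_le_abs_sub hp (center_sub_mem_dyadicGrid j' n')))
    exact ordConnected_Ioo.prod_subset_or_disjoint ordConnected_Icc (hnot_x hx)
      (hnot_x (add_mem hx hw)) (hnot_y (sub_mem hy hh)) (hnot_y (add_mem hy hh))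
  · have hw : ε * (r n / 2 ^ n) ≤ 2⁻¹ ^ (n' + 1) := by
      rw [collar_width_eq hε hr]
      exact pow_le_pow_of_le_one (by norm_num) (by norm_num) (by omega)
    exact Or.inr (disjoint_prod.2 (Or.inl
      (Ioo_disjoint_Ioo_of_le_abs_sub (hw.trans (hsep_x hx)) (hw'.trans (hsep_x hx)))))

end Collar

theorem stmt_12_general (m : ℕ) (hm : 1 ≤ m) (ε : ℝ) (hε : ε = (2 : ℝ)⁻¹ ^ m)
    (r : ℕ → ℝ) (hr : ∀ n, ∃ jn : ℕ, 1 ≤ jn ∧ r n = (2 : ℝ)⁻¹ ^ jn)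
    (n i j n' i' j' : ℕ)
    (hne : (n, i, j) ≠ (n', i', j')) :
    Disjoint (collar r ε n i j) (collar r ε n' i' j') ∨
      collar r ε n i j ⊆ closure (collar r ε n' i' j') ∨
      collar r ε n' i' j' ⊆ closure (collar r ε n i j) := by
  obtain ⟨jn, hjn, hrn⟩ := hr n
  obtain ⟨jn', hjn', hrn'⟩ := hr n'
  rcases lt_trichotomy n n' with hlt | rfl | hgt
  · rcases collar_subset_or_disjoint_of_lt hm hε hrn hrn' hjn' hlt with hsub | hdisj
    · exact Or.inr (Or.inr (hsub.trans subset_closure))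
    · exact Or.inl hdisj
  · have hpow_le : (2 : ℝ)⁻¹ ^ m ≤ 1 := pow_le_one₀ (by norm_num) (by norm_num)
    have hrn_lt : r n < 1 := hrn ▸ pow_lt_one₀ (by norm_num) (by norm_num) (by omega)
    refine Or.inl (collar_disjoint_of_ne ?_ hrn_lt fun h => hne (congrArg (Prod.mk n) h))
    rw [hε]
    exact mul_le_one₀ hpow_le (hrn ▸ by positivity) hrn_lt.le
  · rcases collar_subset_or_disjoint_of_lt hm hε hrn' hrn hjn hgt with hsub | hdisj
    · exact Or.inr (Or.inl (hsub.trans subset_closure))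
    · exact Or.inl hdisj.symm

/-- If `ε = 2⁻ᵐ` and every `rₙ = 2⁻ʲⁿ` is a negative power of two, then the
`ε`-collars of any two distinct dyadic slits are either disjoint, or one is
contained in the closure of the other. -/
theorem stmt_12 (m : ℕ) (hm : 1 ≤ m) (ε : ℝ) (hε : ε = (2 : ℝ)⁻¹ ^ m)
    (r : ℕ → ℝ) (hr : ∀ n, ∃ jn : ℕ, 1 ≤ jn ∧ r n = (2 : ℝ)⁻¹ ^ jn)
    (n i j n' i' j' : ℕ) (hi : i < 2 ^ n) (hj : j < 2 ^ n)
    (hi' : i' < 2 ^ n') (hj' : j' < 2 ^ n')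
    (hne : (n, i, j) ≠ (n', i', j')) :
    Disjoint (collar r ε n i j) (collar r ε n' i' j') ∨
      collar r ε n i j ⊆ closure (collar r ε n' i' j') ∨
      collar r ε n' i' j' ⊆ closure (collar r ε n i j) :=
  stmt_12_general m hm ε hε r hr n i j n' i' j' hne
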